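/- Let α ∈ (0,1) and ε > 0 be fixed, let k = k(d) = ⌊αd⌋, and let s = s(d) be a sequence of positive integers with s(d)/d → ∞ as d → ∞. Let V(d) be a sequence of vertex sets. Then the probability that the uniform model G_{V(d),d,k(d)} contains a clique on s(d) vertices tends to 0 as d → ∞ if |V(d)| ≤ (1−ε)·s·2^{d−k}, and tends to 1 as d → ∞ if |V(d)| ≥ (s−1)·2^{d−k} + 1 (indeed in the latter case an s-clique is present with probability 1, by the pigeonhole principle and the Helly property). -/

import Mathlib

open MeasureTheory Filter
open scoped ENNReal

/-- A subcube of the hypercube `{0,1}^d`, encoded coordinatewise: `none` is a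
free (`⋆`) coordinate, `some b` a coordinate fixed to `b`. -/
abbrev Subcube (d : ℕ) := Fin d → Option Bool

/-- A point `x ∈ {0,1}^d` lies in the subcube `c`. -/
def memSubcube {d : ℕ} (x : Fin d → Bool) (c : Subcube d) : Prop :=
  ∀ i : Fin d, ∀ b : Bool, c i = some b → x i = b

/-- Two subcubes have non-empty intersection. -/
def subcubesIntersect {d : ℕ} (c₁ c₂ : Subcube d) : Prop :=
  ∃ x : Fin d → Bool, memSubcube x c₁ ∧ memSubcube x c₂

/-- The dimension of a subcube: the number of free (`⋆`) coordinates. -/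
def subcubeDim {d : ℕ} (c : Subcube d) : ℕ :=
  (Finset.univ.filter fun i : Fin d => c i = none).card

instance : MeasurableSpace (Option Bool) := ⊤

/-- The distribution of a single coordinate of a binomial random subcube with
parameter `p`: `⋆` with probability `p`, each of `0`, `1` with probability `(1-p)/2`. -/
noncomputable def coordMeasure (p : ℝ) : Measure (Option Bool) :=
  ENNReal.ofReal p • Measure.dirac (none : Option Bool)
    + ENNReal.ofReal ((1 - p) / 2) • Measure.dirac (some false)
    + ENNReal.ofReal ((1 - p) / 2) • Measure.dirac (some true)

/-- The distribution of a binomial random subcube of `Q_d` with parameter `p`. -/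
noncomputable def cubeMeasure (d : ℕ) (p : ℝ) : Measure (Subcube d) :=
  Measure.pi fun _ : Fin d => coordMeasure p

/-- The binomial random subcube intersection model `G_{V,d,p}`: an independent
binomial random subcube with parameter `p` for each vertex of `V`. -/
noncomputable def binomialModel (V : Type*) [Fintype V] (d : ℕ) (p : ℝ) :
    Measure (V → Subcube d) :=
  Measure.pi fun _ : V => cubeMeasure d p

/-- The uniform distribution on the `k`-dimensional subcubes of `Q_d`. -/
noncomputable def uniformCubeMeasure (d k : ℕ) : Measure (Subcube d) :=
  (Measure.count {c : Subcube d | subcubeDim c = k})⁻¹ •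
    Measure.count.restrict {c : Subcube d | subcubeDim c = k}

/-- The uniform random subcube intersection model `G_{V,d,k}`. -/
noncomputable def uniformModel (V : Type*) [Fintype V] (d k : ℕ) :
    Measure (V → Subcube d) :=
  Measure.pi fun _ : V => uniformCubeMeasure d k

/-- The intersection graph of the family of subcubes `f` contains a clique on
`s` vertices. -/
def hasClique {V : Type*} {d : ℕ} (f : V → Subcube d) (s : ℕ) : Prop :=
  ∃ T : Finset V, T.card = s ∧ ∀ u ∈ T, ∀ v ∈ T, subcubesIntersect (f u) (f v)

/-- The feature subcubes `f v`, `v ∈ V`, cover the ambient hypercube `Q_d`. -/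
def coversCube {V : Type*} {d : ℕ} (f : V → Subcube d) : Prop :=
  ∀ x : Fin d → Bool, ∃ v : V, memSubcube x (f v)

/-- `t_{K_s}(p) = -(1/s) log (2((1+p)/2)^s - p^s)`. -/
noncomputable def cliqueThreshold (p : ℝ) (s : ℕ) : ℝ :=
  -(1 / s) * Real.log (2 * ((1 + p) / 2) ^ s - p ^ s)


instance : MeasurableSingletonClass (Option Bool) :=
  ⟨fun _ => MeasurableSpace.measurableSet_top⟩

example (d : ℕ) : MeasurableSingletonClass (Subcube d) := by infer_instance
example (d n : ℕ) : MeasurableSingletonClass (Fin n → Subcube d) := by infer_instance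

lemma meas_all {X : Type*} [Countable X] [MeasurableSpace X] [MeasurableSingletonClass X]
    (S : Set X) : MeasurableSet S := (Set.to_countable S).measurableSet

open Classical in
lemma meas_eq_sum {X : Type*} [Fintype X] [MeasurableSpace X] [MeasurableSingletonClass X]
    (μ : Measure X) (S : Set X) :
    μ S = ∑ a ∈ Finset.univ.filter (· ∈ S), μ {a} := by
  have h : S = ⋃ a ∈ Finset.univ.filter (· ∈ S), {a} := by
    ext x; simp
  have := measure_biUnion_finset (μ := μ) (s := Finset.univ.filter (· ∈ S))
      (f := fun a => ({a} : Set X))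
      (by intro a _ b _ hab
          simp [Function.onFun, Set.disjoint_singleton_left, hab])
      (by intro b _; exact measurableSet_singleton b)
  rw [← this, ← h]


open Classical in
noncomputable def Ncubes (d k : ℕ) : ℕ :=
  (Finset.univ.filter fun c : Subcube d => subcubeDim c = k).card

open Classical in
lemma count_cubes (d k : ℕ) :
    Measure.count {c : Subcube d | subcubeDim c = k} = (Ncubes d k : ℝ≥0∞) := by
  rw [Measure.count_apply_finite _ (Set.toFinite _)]
  congr 1
  simp only [Ncubes]
  congr 1
  ext c
  simp

open Classical in
lemma ucm_singleton (d k : ℕ) (c : Subcube d) :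
    uniformCubeMeasure d k {c}
      = if subcubeDim c = k then ((Ncubes d k : ℝ≥0∞))⁻¹ else 0 := by
  rw [uniformCubeMeasure, Measure.smul_apply, Measure.restrict_apply (measurableSet_singleton c),
    count_cubes]
  by_cases h : subcubeDim c = k
  · have : ({c} : Set (Subcube d)) ∩ {c' | subcubeDim c' = k} = {c} := by
      ext y; simp (config := {contextual := true}) [h]
    rw [this, Measure.count_singleton, if_pos h, smul_eq_mul, mul_one]
  · have : ({c} : Set (Subcube d)) ∩ {c' | subcubeDim c' = k} = ∅ := by
      ext y; simp (config := {contextual := true})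
      rintro rfl; exact h
    rw [this, measure_empty, if_neg h, smul_eq_mul, mul_zero]

open Classical in
lemma Ncubes_pos (d k : ℕ) (hkd : k ≤ d) : 0 < Ncubes d k := by
  rw [Ncubes, Finset.card_pos]
  refine ⟨fun i => if (i : ℕ) < k then none else some false, ?_⟩
  simp only [Finset.mem_filter, Finset.mem_univ, true_and]
  unfold subcubeDim
  have h1 : (Finset.univ.filter fun i : Fin d =>
      (if (i : ℕ) < k then (none : Option Bool) else some false) = none)
      = (Finset.range k).attachFin (fun m hm => lt_of_lt_of_le (Finset.mem_range.mp hm) hkd) := by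
    ext i
    by_cases h : (i : ℕ) < k <;> simp [Finset.mem_attachFin, h]
  rw [h1, Finset.card_attachFin, Finset.card_range]

open Classical in
lemma ucm_apply (d k : ℕ) (S : Set (Subcube d)) :
    uniformCubeMeasure d k S
      = (Finset.univ.filter fun c => c ∈ S ∧ subcubeDim c = k).card / (Ncubes d k : ℝ≥0∞) := by
  rw [meas_eq_sum]
  rw [Finset.sum_congr rfl (fun c _ => ucm_singleton d k c)]
  rw [Finset.sum_ite, Finset.sum_const, Finset.sum_const_zero, add_zero]
  rw [Finset.filter_filter, div_eq_mul_inv, nsmul_eq_mul]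

open Classical in
lemma ucm_univ (d k : ℕ) (hkd : k ≤ d) : uniformCubeMeasure d k Set.univ = 1 := by
  rw [ucm_apply]
  simp only [Set.mem_univ, true_and]
  rw [show (Finset.univ.filter fun c : Subcube d => subcubeDim c = k).card = Ncubes d k from rfl]
  exact ENNReal.div_self (by exact_mod_cast (Ncubes_pos d k hkd).ne') (by simp)

lemma ucm_prob (d k : ℕ) (hkd : k ≤ d) : IsProbabilityMeasure (uniformCubeMeasure d k) :=
  ⟨ucm_univ d k hkd⟩

open Classical in
lemma card_points (d : ℕ) (c : Subcube d) :
    (Finset.univ.filter fun x : Fin d → Bool => memSubcube x c).card = 2 ^ subcubeDim c := by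
  have h2 : (2 : ℕ) ^ subcubeDim c = Fintype.card ({i : Fin d // c i = none} → Bool) := by
    simp [subcubeDim, Fintype.card_subtype]
  rw [h2]
  rw [← Finset.card_univ]
  apply Finset.card_bij' (i := fun x _ => fun j : {i : Fin d // c i = none} => x j.1)
    (j := fun g _ => fun i : Fin d => if h : c i = none then g ⟨i, h⟩ else (c i).getD false)
  · intro x _; exact Finset.mem_univ _
  · intro g _
    simp only [Finset.mem_filter, Finset.mem_univ, true_and]
    intro i b hb
    have hne : ¬ c i = none := by rw [hb]; simp
    show (if h : c i = none then g ⟨i, h⟩ else (c i).getD false) = b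
    rw [dif_neg hne, hb]
    rfl
  · intro x hx
    simp only [Finset.mem_filter, Finset.mem_univ, true_and] at hx
    funext i
    by_cases h : c i = none
    · simp [h]
    · rw [dif_neg h]
      obtain ⟨b, hb⟩ := Option.ne_none_iff_exists'.mp h
      rw [hb]
      exact (hx i b hb).symm
  · intro g _
    funext j
    simp [j.2]

def flipc {d : ℕ} (z : Fin d → Bool) (c : Subcube d) : Subcube d :=
  fun i => (c i).map fun b => xor b (z i)

lemma flipc_flipc {d : ℕ} (z : Fin d → Bool) (c : Subcube d) : flipc z (flipc z c) = c := by
  funext i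
  cases h : c i <;> simp [flipc, h]

lemma subcubeDim_flipc {d : ℕ} (z : Fin d → Bool) (c : Subcube d) :
    subcubeDim (flipc z c) = subcubeDim c := by
  classical
  unfold subcubeDim
  congr 1
  apply Finset.filter_congr
  intro i _
  cases h : c i <;> simp [flipc, h]

lemma memSubcube_flipc {d : ℕ} (z : Fin d → Bool) (c : Subcube d) (y : Fin d → Bool)
    (hy : memSubcube y c) : memSubcube (fun i => xor (y i) (z i)) (flipc z c) := by
  intro i b hb
  simp only [flipc, Option.map_eq_some_iff] at hb
  obtain ⟨b0, hb0, rfl⟩ := hb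
  show xor (y i) (z i) = xor b0 (z i)
  rw [hy i b0 hb0]

open Classical in
noncomputable def Mcubes (d k : ℕ) (x : Fin d → Bool) : ℕ :=
  (Finset.univ.filter fun c : Subcube d => memSubcube x c ∧ subcubeDim c = k).card

open Classical in
lemma Mcubes_const (d k : ℕ) (x y : Fin d → Bool) : Mcubes d k x = Mcubes d k y := by
  unfold Mcubes
  set z : Fin d → Bool := fun i => xor (x i) (y i) with hz
  apply Finset.card_bij' (i := fun c _ => flipc z c) (j := fun c _ => flipc z c)
  · intro c hc
    simp only [Finset.mem_filter, Finset.mem_univ, true_and] at hc ⊢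
    refine ⟨?_, by rw [subcubeDim_flipc]; exact hc.2⟩
    have := memSubcube_flipc z c x hc.1
    have hxy : (fun i => xor (x i) (z i)) = y := by
      funext i; simp only [hz]; cases x i <;> cases y i <;> rfl
    rwa [hxy] at this
  · intro c hc
    simp only [Finset.mem_filter, Finset.mem_univ, true_and] at hc ⊢
    refine ⟨?_, by rw [subcubeDim_flipc]; exact hc.2⟩
    have := memSubcube_flipc z c y hc.1
    have hxy : (fun i => xor (y i) (z i)) = x := by
      funext i; simp only [hz]; cases x i <;> cases y i <;> rfl
    rwa [hxy] at this
  · intro c _; exact flipc_flipc z c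
  · intro c _; exact flipc_flipc z c

open Classical in
lemma sum_Mcubes (d k : ℕ) :
    ∑ x : Fin d → Bool, Mcubes d k x = Ncubes d k * 2 ^ k := by
  unfold Mcubes
  have h1 : ∀ x : Fin d → Bool,
      (Finset.univ.filter fun c : Subcube d => memSubcube x c ∧ subcubeDim c = k).card
        = ∑ c : Subcube d, if memSubcube x c ∧ subcubeDim c = k then 1 else 0 := by
    intro x; rw [Finset.card_filter]
  rw [Finset.sum_congr rfl fun x _ => h1 x]
  rw [Finset.sum_comm]
  have h2 : ∀ c : Subcube d,
      (∑ x : Fin d → Bool, if memSubcube x c ∧ subcubeDim c = k then 1 else 0)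
        = if subcubeDim c = k then 2 ^ k else 0 := by
    intro c
    by_cases h : subcubeDim c = k
    · rw [if_pos h]
      have : (∑ x : Fin d → Bool, if memSubcube x c ∧ subcubeDim c = k then 1 else 0)
          = ∑ x : Fin d → Bool, if memSubcube x c then 1 else 0 := by
        apply Finset.sum_congr rfl
        intro x _
        simp [h]
      rw [this, ← Finset.card_filter, card_points, h]
    · rw [if_neg h]
      apply Finset.sum_eq_zero
      intro x _
      simp [h]
  rw [Finset.sum_congr rfl fun c _ => h2 c]
  rw [Finset.sum_ite, Finset.sum_const, Finset.sum_const_zero, add_zero, smul_eq_mul]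
  rfl

open Classical in
lemma Mcubes_mul (d k : ℕ) (hkd : k ≤ d) (x : Fin d → Bool) :
    Mcubes d k x * 2 ^ (d - k) = Ncubes d k := by
  have h1 : ∑ y : Fin d → Bool, Mcubes d k y = 2 ^ d * Mcubes d k x := by
    rw [Finset.sum_congr rfl fun y _ => Mcubes_const d k y x]
    rw [Finset.sum_const, Finset.card_univ, smul_eq_mul]
    congr 1
    simp [Fintype.card_fun]
  have h2 := sum_Mcubes d k
  rw [h1] at h2
  have hd : (2:ℕ) ^ d = 2 ^ (d - k) * 2 ^ k := by
    rw [← pow_add, Nat.sub_add_cancel hkd]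
  rw [hd] at h2
  apply Nat.eq_of_mul_eq_mul_right (show 0 < 2 ^ k by positivity)
  calc Mcubes d k x * 2 ^ (d - k) * 2 ^ k
      = 2 ^ (d - k) * 2 ^ k * Mcubes d k x := by ring
    _ = Ncubes d k * 2 ^ k := h2


open Classical in
lemma helly {d : ℕ} {V : Type*} (f : V → Subcube d) (T : Finset V)
    (h : ∀ u ∈ T, ∀ v ∈ T, subcubesIntersect (f u) (f v)) :
    ∃ x : Fin d → Bool, ∀ v ∈ T, memSubcube x (f v) := by
  refine ⟨fun i => if ∃ v ∈ T, f v i = some true then true else false, ?_⟩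
  intro v hv i b hb
  cases b with
  | true => exact if_pos ⟨v, hv, hb⟩
  | false =>
    apply if_neg
    rintro ⟨u, hu, hub⟩
    obtain ⟨y, hyu, hyv⟩ := h u hu v hv
    have h1 := hyu i true hub
    have h2 := hyv i false hb
    rw [h1] at h2
    exact Bool.noConfusion h2

open Classical in
lemma count_swap {d n : ℕ} (f : Fin n → Subcube d) :
    (∑ x : Fin d → Bool, (Finset.univ.filter fun v => memSubcube x (f v)).card)
      = ∑ v : Fin n, 2 ^ subcubeDim (f v) := by
  have h1 : ∀ x : Fin d → Bool, (Finset.univ.filter fun v => memSubcube x (f v)).card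
      = ∑ v : Fin n, if memSubcube x (f v) then 1 else 0 := fun x => Finset.card_filter _ _
  rw [Finset.sum_congr rfl fun x _ => h1 x, Finset.sum_comm]
  apply Finset.sum_congr rfl
  intro v _
  rw [← Finset.card_filter, card_points]

open Classical in
lemma pigeonhole_clique {d k s n : ℕ} (hkd : k ≤ d) (f : Fin n → Subcube d)
    (hdim : ∀ v, subcubeDim (f v) = k) (hn : (s - 1) * 2 ^ (d - k) + 1 ≤ n) (hs : 1 ≤ s) :
    ∃ T : Finset (Fin n), T.card = s ∧ ∀ u ∈ T, ∀ v ∈ T, subcubesIntersect (f u) (f v) := by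
  have hx : ∃ x : Fin d → Bool, s ≤ (Finset.univ.filter fun v => memSubcube x (f v)).card := by
    by_contra hcon
    push_neg at hcon
    have hle : ∀ x : Fin d → Bool,
        (Finset.univ.filter fun v => memSubcube x (f v)).card ≤ s - 1 := by
      intro x; have := hcon x; omega
    have h1 : (∑ x : Fin d → Bool, (Finset.univ.filter fun v => memSubcube x (f v)).card)
        ≤ 2 ^ d * (s - 1) := by
      calc _ ≤ ∑ _x : Fin d → Bool, (s - 1) := Finset.sum_le_sum fun x _ => hle x
        _ = 2 ^ d * (s - 1) := by
          rw [Finset.sum_const, Finset.card_univ, smul_eq_mul]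
          congr 1
          simp [Fintype.card_fun]
    rw [count_swap] at h1
    have h2 : (∑ v : Fin n, 2 ^ subcubeDim (f v)) = n * 2 ^ k := by
      rw [Finset.sum_congr rfl fun v _ => by rw [hdim v], Finset.sum_const, Finset.card_univ,
        smul_eq_mul, Fintype.card_fin]
    rw [h2] at h1
    have h3 : ((s - 1) * 2 ^ (d - k) + 1) * 2 ^ k ≤ n * 2 ^ k :=
      Nat.mul_le_mul_right _ hn
    have h4 : (2:ℕ) ^ d = 2 ^ (d - k) * 2 ^ k := by rw [← pow_add, Nat.sub_add_cancel hkd]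
    have h5 : (0:ℕ) < 2 ^ k := by positivity
    nlinarith [h1, h3, h4, h5]
  obtain ⟨x, hx⟩ := hx
  obtain ⟨T, hTsub, hTcard⟩ := Finset.exists_subset_card_eq hx
  refine ⟨T, hTcard, fun u hu v hv => ?_⟩
  have hu' := Finset.mem_filter.mp (hTsub hu)
  have hv' := Finset.mem_filter.mp (hTsub hv)
  exact ⟨x, hu'.2, hv'.2⟩


lemma um_singleton {V : Type*} [Fintype V] (d k : ℕ) (hkd : k ≤ d) (f : V → Subcube d) :
    uniformModel V d k {f} = ∏ v : V, uniformCubeMeasure d k {f v} := by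
  haveI : ∀ v : V, IsProbabilityMeasure (uniformCubeMeasure d k) := fun _ => ucm_prob d k hkd
  have h : ({f} : Set (V → Subcube d)) = Set.univ.pi fun v => ({f v} : Set (Subcube d)) := by
    ext g; simp [funext_iff]
  rw [uniformModel, h, Measure.pi_pi]

lemma um_prob {V : Type*} [Fintype V] (d k : ℕ) (hkd : k ≤ d) :
    IsProbabilityMeasure (uniformModel V d k) := by
  haveI : ∀ v : V, IsProbabilityMeasure (uniformCubeMeasure d k) := fun _ => ucm_prob d k hkd
  refine ⟨?_⟩
  rw [uniformModel, show (Set.univ : Set (V → Subcube d)) = Set.univ.pi (fun _ => Set.univ) by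
    rw [Set.pi_univ], Measure.pi_pi]
  simp [ucm_univ d k hkd]

open Classical in
lemma ucm_dim_full (d k : ℕ) (hkd : k ≤ d) :
    uniformCubeMeasure d k {c : Subcube d | subcubeDim c = k} = 1 := by
  rw [ucm_apply]
  simp only [Set.mem_setOf_eq, and_self]
  rw [show (Finset.univ.filter fun c : Subcube d => subcubeDim c = k).card = Ncubes d k from rfl]
  exact ENNReal.div_self (by exact_mod_cast (Ncubes_pos d k hkd).ne') (by simp)

lemma um_dim_full {V : Type*} [Fintype V] (d k : ℕ) (hkd : k ≤ d) :
    uniformModel V d k {f : V → Subcube d | ∀ v, subcubeDim (f v) = k} = 1 := by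
  haveI : ∀ v : V, IsProbabilityMeasure (uniformCubeMeasure d k) := fun _ => ucm_prob d k hkd
  have h : {f : V → Subcube d | ∀ v, subcubeDim (f v) = k}
      = Set.univ.pi fun _ : V => {c : Subcube d | subcubeDim c = k} := by
    ext g; simp
  rw [uniformModel, h, Measure.pi_pi]
  rw [Finset.prod_congr rfl fun v _ => ucm_dim_full d k hkd]
  simp

lemma ucm_sing_ne_top (d k : ℕ) (hkd : k ≤ d) (c : Subcube d) :
    uniformCubeMeasure d k {c} ≠ ⊤ := by
  rw [ucm_singleton]
  split
  · exact ENNReal.inv_ne_top.mpr (by exact_mod_cast (Ncubes_pos d k hkd).ne')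
  · exact ENNReal.zero_ne_top

open Classical in
lemma um_toReal {V : Type*} [Fintype V] (d k : ℕ) (hkd : k ≤ d) (S : Set (V → Subcube d)) :
    (uniformModel V d k S).toReal
      = ∑ f ∈ Finset.univ.filter (· ∈ S),
          ∏ v : V, (uniformCubeMeasure d k {f v}).toReal := by
  rw [meas_eq_sum]
  rw [ENNReal.toReal_sum (fun f _ => by
    rw [um_singleton d k hkd]
    exact ENNReal.prod_ne_top fun v _ => ucm_sing_ne_top d k hkd (f v))]
  exact Finset.sum_congr rfl fun f _ => by rw [um_singleton d k hkd, ENNReal.toReal_prod]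

noncomputable def wcube (d k : ℕ) (c : Subcube d) : ℝ :=
  (uniformCubeMeasure d k {c}).toReal

lemma wcube_nonneg (d k : ℕ) (c : Subcube d) : 0 ≤ wcube d k c := ENNReal.toReal_nonneg

open Classical in
lemma wcube_eq (d k : ℕ) (c : Subcube d) :
    wcube d k c = if subcubeDim c = k then ((Ncubes d k : ℝ))⁻¹ else 0 := by
  rw [wcube, ucm_singleton]
  split
  · rw [ENNReal.toReal_inv]; norm_num
  · simp

open Classical in
lemma sum_wcube (d k : ℕ) (hkd : k ≤ d) : ∑ c : Subcube d, wcube d k c = 1 := by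
  rw [Finset.sum_congr rfl fun c _ => wcube_eq d k c]
  rw [Finset.sum_ite, Finset.sum_const, Finset.sum_const_zero, add_zero, nsmul_eq_mul]
  have h1 : (Finset.univ.filter fun c : Subcube d => subcubeDim c = k).card = Ncubes d k := by
    rw [Ncubes]
  rw [h1]
  exact mul_inv_cancel₀ (by exact_mod_cast (Ncubes_pos d k hkd).ne')

open Classical in
lemma sum_wcube_mem (d k : ℕ) (x : Fin d → Bool) :
    ∑ c ∈ Finset.univ.filter fun c : Subcube d => memSubcube x c, wcube d k c
      = (Mcubes d k x : ℝ) / (Ncubes d k : ℝ) := by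
  rw [Finset.sum_congr rfl fun c _ => wcube_eq d k c]
  rw [Finset.sum_ite, Finset.sum_const, Finset.sum_const_zero, add_zero, nsmul_eq_mul]
  rw [Finset.filter_filter]
  rw [div_eq_mul_inv]
  congr 2

open Classical in
noncomputable def countMem {d n : ℕ} (x : Fin d → Bool) (f : Fin n → Subcube d) : ℕ :=
  (Finset.univ.filter fun v => memSubcube x (f v)).card

set_option maxHeartbeats 1000000 in
open Classical in
lemma chernoff (d k n s : ℕ) (hkd : k ≤ d) (x : Fin d → Bool) (ε : ℝ) (hε : 0 < ε) :
    (uniformModel (Fin n) d k {f : Fin n → Subcube d | s ≤ countMem x f}).toReal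
      ≤ ((1 + ε) ^ s)⁻¹
          * (1 + ε * ((Mcubes d k x : ℝ) / (Ncubes d k : ℝ))) ^ n := by
  set q : ℝ := (Mcubes d k x : ℝ) / (Ncubes d k : ℝ) with hq
  have hq0 : 0 ≤ q := by positivity
  rw [um_toReal _ _ hkd]
  have hconv : ∀ (c : Subcube d), ((uniformCubeMeasure d k) {c}).toReal = wcube d k c :=
    fun _ => rfl
  simp only [hconv]
  have key : ∀ F : Finset (Fin n → Subcube d),
      (∀ f ∈ F, s ≤ countMem x f) →
      (1 + ε) ^ s * ∑ f ∈ F, ∏ v, wcube d k (f v) ≤ (1 + ε * q) ^ n := by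
    intro F hF
    have step1 : (1 + ε) ^ s * ∑ f ∈ F, ∏ v, wcube d k (f v)
        ≤ ∑ f ∈ F, (1 + ε) ^ countMem x f * ∏ v, wcube d k (f v) := by
      rw [Finset.mul_sum]
      apply Finset.sum_le_sum
      intro f hf
      apply mul_le_mul_of_nonneg_right _
        (Finset.prod_nonneg fun v _ => wcube_nonneg d k (f v))
      exact pow_le_pow_right₀ (by linarith) (hF f hf)
    have step2 : (∑ f ∈ F, (1 + ε) ^ countMem x f * ∏ v, wcube d k (f v))
        ≤ ∑ f : Fin n → Subcube d, (1 + ε) ^ countMem x f * ∏ v, wcube d k (f v) := by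
      apply Finset.sum_le_sum_of_subset_of_nonneg (Finset.subset_univ F)
      intro f _ _
      exact mul_nonneg (pow_nonneg (by linarith) _)
        (Finset.prod_nonneg fun v _ => wcube_nonneg d k (f v))
    have step3 : (∑ f : Fin n → Subcube d, (1 + ε) ^ countMem x f * ∏ v, wcube d k (f v))
        = (1 + ε * q) ^ n := by
      have hterm : ∀ f : Fin n → Subcube d,
          (1 + ε) ^ countMem x f * ∏ v, wcube d k (f v)
          = ∏ v, (if memSubcube x (f v) then (1 + ε) else 1) * wcube d k (f v) := by
        intro f
        rw [Finset.prod_mul_distrib]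
        congr 1
        rw [countMem, Finset.card_filter, ← Finset.prod_pow_eq_pow_sum]
        apply Finset.prod_congr rfl
        intro v _
        by_cases h : memSubcube x (f v) <;> simp [h]
      rw [Finset.sum_congr rfl fun f _ => hterm f]
      have hfactor : (∑ c : Subcube d, (if memSubcube x c then (1 + ε) else 1) * wcube d k c)
          = 1 + ε * q := by
        have hsplit : ∀ c : Subcube d,
            (if memSubcube x c then (1 + ε) else 1) * wcube d k c
              = wcube d k c + (if memSubcube x c then ε * wcube d k c else 0) := by
          intro c
          by_cases h : memSubcube x c <;> simp [h] <;> ring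
        rw [Finset.sum_congr rfl fun c _ => hsplit c, Finset.sum_add_distrib]
        rw [sum_wcube d k hkd]
        congr 1
        rw [Finset.sum_ite, Finset.sum_const_zero, add_zero, ← Finset.mul_sum]
        rw [show (Finset.filter (fun c => memSubcube x c) Finset.univ)
            = (Finset.univ.filter fun c : Subcube d => memSubcube x c) from
          Finset.filter_congr_decidable _ _ _]
        rw [sum_wcube_mem d k x]
      have hps := Finset.prod_univ_sum (ι := Fin n)
        (fun _ : Fin n => (Finset.univ : Finset (Subcube d)))
        (fun _ c => (if memSubcube x c then (1 + ε) else 1) * wcube d k c)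
      rw [Fintype.piFinset_univ] at hps
      rw [← hps]
      rw [Finset.prod_congr rfl fun v (_ : v ∈ Finset.univ) => hfactor]
      rw [Finset.prod_const, Finset.card_univ, Fintype.card_fin]
    calc (1 + ε) ^ s * ∑ f ∈ F, ∏ v, wcube d k (f v) ≤ _ := step1
      _ ≤ _ := step2
      _ = _ := step3
  have hpow : (0:ℝ) < (1 + ε) ^ s := pow_pos (by linarith) _
  rw [inv_mul_eq_div, le_div_iff₀ hpow, mul_comm]
  apply key
  intro f hf
  simp only [Finset.mem_filter, Set.mem_setOf_eq] at hf
  exact hf.2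


open Classical in
lemma le_countMem {d n : ℕ} (x : Fin d → Bool) (f : Fin n → Subcube d) (T : Finset (Fin n))
    (hT : ∀ v ∈ T, memSubcube x (f v)) : T.card ≤ countMem x f :=
  Finset.card_le_card fun v hv => Finset.mem_filter.mpr ⟨Finset.mem_univ v, hT v hv⟩

lemma part2_main (d k s n : ℕ) (hkd : k ≤ d) (hs : 1 ≤ s)
    (hn : (s - 1) * 2 ^ (d - k) + 1 ≤ n) :
    uniformModel (Fin n) d k {f : Fin n → Subcube d | hasClique f s} = 1 := by
  haveI := um_prob (V := Fin n) d k hkd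
  apply le_antisymm prob_le_one
  calc (1 : ℝ≥0∞) = uniformModel (Fin n) d k {f : Fin n → Subcube d | ∀ v, subcubeDim (f v) = k} :=
        (um_dim_full d k hkd).symm
    _ ≤ _ := by
        apply measure_mono
        intro f hf
        exact pigeonhole_clique hkd f hf hn hs

lemma base_ineq (ε : ℝ) (hε : 0 < ε) (hε2 : ε ≤ 1 / 2) :
    (1 + ε ^ 3) * Real.exp (ε - ε ^ 2) ≤ 1 + ε := by
  have h1 : 1 - (ε - ε ^ 2) ≤ Real.exp (-(ε - ε ^ 2)) := by
    have := Real.add_one_le_exp (-(ε - ε ^ 2)); linarith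
  have h2 : Real.exp (-(ε - ε ^ 2)) = (Real.exp (ε - ε ^ 2))⁻¹ := Real.exp_neg _
  have h3 : 0 < Real.exp (ε - ε ^ 2) := Real.exp_pos _
  have h4 : (1 - (ε - ε ^ 2)) * Real.exp (ε - ε ^ 2) ≤ 1 := by
    rw [h2] at h1
    calc (1 - (ε - ε ^ 2)) * Real.exp (ε - ε ^ 2)
        ≤ (Real.exp (ε - ε ^ 2))⁻¹ * Real.exp (ε - ε ^ 2) :=
          mul_le_mul_of_nonneg_right h1 h3.le
      _ = 1 := inv_mul_cancel₀ h3.ne'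
  nlinarith [h4, h3]

lemma part1_num (d k n s : ℕ) (ε : ℝ) (hε : 0 < ε) (hε2 : ε ≤ 1 / 2)
    (hn : (n : ℝ) ≤ (1 - ε) * s * 2 ^ (d - k)) :
    ((1 + ε) ^ s)⁻¹ * (1 + ε * ((2 : ℝ) ^ (d - k))⁻¹) ^ n ≤ ((1 + ε ^ 3) ^ s)⁻¹ := by
  set Q : ℝ := ((2 : ℝ) ^ (d - k))⁻¹ with hQ
  have hQ0 : 0 ≤ Q := by positivity
  set E : ℝ := Real.exp (ε - ε ^ 2) with hEdef
  have hE0 : 0 < E := Real.exp_pos _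
  have h1 : (1 + ε * Q) ^ n ≤ E ^ s := by
    calc (1 + ε * Q) ^ n ≤ Real.exp (ε * Q) ^ n := by
          apply pow_le_pow_left₀ (by positivity)
          have := Real.add_one_le_exp (ε * Q); linarith
      _ = Real.exp ((n : ℝ) * (ε * Q)) := (Real.exp_nat_mul _ n).symm
      _ ≤ Real.exp ((s : ℝ) * (ε - ε ^ 2)) := by
          apply Real.exp_le_exp.mpr
          have hnQ : (n : ℝ) * Q ≤ (1 - ε) * s := by
            have h2 : ((2 : ℝ) ^ (d - k)) * Q = 1 := by
              rw [hQ]; field_simp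
            calc (n : ℝ) * Q ≤ ((1 - ε) * s * 2 ^ (d - k)) * Q :=
                  mul_le_mul_of_nonneg_right hn hQ0
              _ = (1 - ε) * s * (2 ^ (d - k) * Q) := by ring
              _ = (1 - ε) * s := by rw [h2, mul_one]
          nlinarith [hnQ, hε.le]
      _ = E ^ s := Real.exp_nat_mul _ s
  have base := base_ineq ε hε hε2
  have powed : (1 + ε ^ 3) ^ s * E ^ s ≤ (1 + ε) ^ s := by
    rw [← mul_pow]
    exact pow_le_pow_left₀ (by positivity) base s
  have hinv3 : (0 : ℝ) < (1 + ε ^ 3) ^ s := by positivity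
  have hinv1 : (0 : ℝ) < (1 + ε) ^ s := by positivity
  rw [inv_mul_eq_div, div_le_iff₀ hinv1]
  calc (1 + ε * Q) ^ n ≤ E ^ s := h1
    _ = ((1 + ε ^ 3) ^ s)⁻¹ * ((1 + ε ^ 3) ^ s * E ^ s) := by
        rw [← mul_assoc, inv_mul_cancel₀ hinv3.ne', one_mul]
    _ ≤ ((1 + ε ^ 3) ^ s)⁻¹ * (1 + ε) ^ s :=
        mul_le_mul_of_nonneg_left powed (by positivity)

open Classical in
lemma part1_main (d k n s : ℕ) (hkd : k ≤ d) (ε : ℝ) (hε : 0 < ε) (hε2 : ε ≤ 1 / 2)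
    (hn : (n : ℝ) ≤ (1 - ε) * s * 2 ^ (d - k)) :
    (uniformModel (Fin n) d k {f : Fin n → Subcube d | hasClique f s}).toReal
      ≤ 2 ^ d * ((1 + ε ^ 3) ^ s)⁻¹ := by
  haveI := um_prob (V := Fin n) d k hkd
  have hincl : {f : Fin n → Subcube d | hasClique f s}
      ⊆ ⋃ x : Fin d → Bool, {f : Fin n → Subcube d | s ≤ countMem x f} := by
    intro f hf
    obtain ⟨T, hTcard, hTcl⟩ := hf
    obtain ⟨x, hx⟩ := helly f T hTcl
    exact Set.mem_iUnion.mpr ⟨x, by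
      simp only [Set.mem_setOf_eq]
      rw [← hTcard]
      exact le_countMem x f T hx⟩
  have h1 : uniformModel (Fin n) d k {f : Fin n → Subcube d | hasClique f s}
      ≤ ∑ x : Fin d → Bool, uniformModel (Fin n) d k {f : Fin n → Subcube d | s ≤ countMem x f} :=
    (measure_mono hincl).trans ((measure_iUnion_le _).trans_eq (tsum_fintype _))
  have hfin : (∑ x : Fin d → Bool,
      uniformModel (Fin n) d k {f : Fin n → Subcube d | s ≤ countMem x f}) ≠ ⊤ :=
    ENNReal.sum_ne_top.mpr fun x _ => measure_ne_top _ _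
  have h2 := ENNReal.toReal_mono hfin h1
  rw [ENNReal.toReal_sum (fun x _ => measure_ne_top _ _)] at h2
  have hQval : ∀ x : Fin d → Bool,
      (Mcubes d k x : ℝ) / (Ncubes d k : ℝ) = ((2 : ℝ) ^ (d - k))⁻¹ := by
    intro x
    have h := Mcubes_mul d k hkd x
    have hN := Ncubes_pos d k hkd
    have hM : 0 < Mcubes d k x := by
      rcases Nat.eq_zero_or_pos (Mcubes d k x) with h0 | h0
      · rw [h0, zero_mul] at h; omega
      · exact h0
    have hcast : (Mcubes d k x : ℝ) * 2 ^ (d - k) = (Ncubes d k : ℝ) := by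
      exact_mod_cast congrArg (Nat.cast : ℕ → ℝ) h
    rw [← hcast]
    rw [div_eq_iff (by positivity)]
    field_simp
  have h3 : ∀ x : Fin d → Bool,
      (uniformModel (Fin n) d k {f : Fin n → Subcube d | s ≤ countMem x f}).toReal
        ≤ ((1 + ε) ^ s)⁻¹ * (1 + ε * ((2 : ℝ) ^ (d - k))⁻¹) ^ n := by
    intro x
    have := chernoff d k n s hkd x ε hε
    rwa [hQval x] at this
  calc (uniformModel (Fin n) d k {f : Fin n → Subcube d | hasClique f s}).toReal
      ≤ ∑ x : Fin d → Bool,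
          (uniformModel (Fin n) d k {f : Fin n → Subcube d | s ≤ countMem x f}).toReal := h2
    _ ≤ ∑ _x : Fin d → Bool, ((1 + ε) ^ s)⁻¹ * (1 + ε * ((2 : ℝ) ^ (d - k))⁻¹) ^ n :=
        Finset.sum_le_sum fun x _ => h3 x
    _ = 2 ^ d * (((1 + ε) ^ s)⁻¹ * (1 + ε * ((2 : ℝ) ^ (d - k))⁻¹) ^ n) := by
        rw [Finset.sum_const, Finset.card_univ, nsmul_eq_mul]
        congr 1
        simp [Fintype.card_fun]
    _ ≤ 2 ^ d * ((1 + ε ^ 3) ^ s)⁻¹ := by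
        apply mul_le_mul_of_nonneg_left (part1_num d k n s ε hε hε2 hn) (by positivity)

lemma bound_tendsto (c : ℝ) (hc : 0 < c) (s : ℕ → ℕ)
    (hs : Tendsto (fun d : ℕ => (s d : ℝ) / d) atTop atTop) :
    Tendsto (fun d : ℕ => (2 : ℝ) ^ d * ((1 + c) ^ s d)⁻¹) atTop (nhds 0) := by
  have hlog : 0 < Real.log (1 + c) := Real.log_pos (by linarith)
  have heq : ∀ d : ℕ, (2 : ℝ) ^ d * ((1 + c) ^ s d)⁻¹
      = Real.exp ((d : ℝ) * Real.log 2 - (s d : ℝ) * Real.log (1 + c)) := by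
    intro d
    rw [Real.exp_sub, div_eq_mul_inv]
    congr 1
    · rw [Real.exp_nat_mul, Real.exp_log two_pos]
    · rw [Real.exp_nat_mul, Real.exp_log (by linarith)]
  have hg : Tendsto (fun d : ℕ => (d : ℝ) * Real.log 2 - (s d : ℝ) * Real.log (1 + c))
      atTop atBot := by
    apply tendsto_atBot_mono' atTop (f₁ := fun d : ℕ => -(d : ℝ))
    · have h1 : ∀ᶠ d : ℕ in atTop, (Real.log 2 + 1) / Real.log (1 + c) ≤ (s d : ℝ) / d :=
        hs.eventually_ge_atTop _
      have h2 : ∀ᶠ d : ℕ in atTop, 1 ≤ d := eventually_ge_atTop 1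
      filter_upwards [h1, h2] with d hd1 hd2
      have hd0 : (0 : ℝ) < d := by exact_mod_cast hd2
      have h3 : (Real.log 2 + 1) / Real.log (1 + c) * d ≤ s d :=
        (le_div_iff₀ hd0).mp hd1
      have h4 : (Real.log 2 + 1) * d ≤ (s d : ℝ) * Real.log (1 + c) := by
        rw [div_mul_eq_mul_div, div_le_iff₀ hlog] at h3
        linarith [h3]
      nlinarith [h4]
    · exact tendsto_neg_atBot_iff.mpr tendsto_natCast_atTop_atTop
  have := Real.tendsto_exp_atBot.comp hg
  exact this.congr fun d => (heq d).symm


/-- **Theorem (uniform model, large cliques).** Fix `α ∈ (0,1)`, `ε > 0`, let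
`k(d) = ⌊αd⌋` and `s(d)/d → ∞`. If `|V(d)| ≤ (1-ε) s 2^(d-k)` the probability that
`G_{V(d),d,k}` contains an `s(d)`-clique tends to `0`; if
`|V(d)| ≥ (s-1) 2^(d-k) + 1` an `s(d)`-clique is present with probability `1` (by
the pigeonhole principle and the Helly property), so in particular the probability
tends to `1`. -/
theorem uniform_large_clique (α : ℝ) (hα : α ∈ Set.Ioo (0 : ℝ) 1)
    (ε : ℝ) (hε : 0 < ε)
    (k : ℕ → ℕ) (hk : ∀ d, k d = ⌊α * d⌋₊)
    (s : ℕ → ℕ) (hs1 : ∀ d, 1 ≤ s d)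
    (hs : Tendsto (fun d : ℕ => (s d : ℝ) / d) atTop atTop)
    (n : ℕ → ℕ) :
    ((∀ d : ℕ, (n d : ℝ) ≤ (1 - ε) * s d * 2 ^ (d - k d)) →
      Tendsto (fun d => uniformModel (Fin (n d)) d (k d) {f | hasClique f (s d)})
        atTop (nhds 0)) ∧
    (∀ d : ℕ, (s d - 1) * 2 ^ (d - k d) + 1 ≤ n d →
      uniformModel (Fin (n d)) d (k d) {f | hasClique f (s d)} = 1) := by

  have hkd : ∀ d, k d ≤ d := by
    intro d
    rw [hk d]
    calc ⌊α * d⌋₊ ≤ ⌊(d : ℝ)⌋₊ := Nat.floor_mono (by nlinarith [hα.1.le, hα.2.le, Nat.cast_nonneg (α := ℝ) d])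
      _ = d := Nat.floor_natCast d
  constructor
  · intro hn
    set ε' : ℝ := min ε (1 / 2) with hε'def
    have hε'0 : 0 < ε' := lt_min hε (by norm_num)
    have hε'2 : ε' ≤ 1 / 2 := min_le_right _ _
    have hn' : ∀ d, (n d : ℝ) ≤ (1 - ε') * s d * 2 ^ (d - k d) := by
      intro d
      refine (hn d).trans ?_
      have h1 : (1 - ε : ℝ) ≤ 1 - ε' := by
        have := min_le_left ε (1/2); simp only [hε'def]; linarith
      apply mul_le_mul_of_nonneg_right _ (by positivity)
      exact mul_le_mul_of_nonneg_right h1 (by positivity)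
    apply tendsto_of_tendsto_of_tendsto_of_le_of_le
      (g := fun _ : ℕ => (0 : ℝ≥0∞))
      (h := fun d : ℕ => ENNReal.ofReal ((2 : ℝ) ^ d * ((1 + ε' ^ 3) ^ s d)⁻¹))
      tendsto_const_nhds
      (by
        have := ENNReal.tendsto_ofReal
          (bound_tendsto (ε' ^ 3) (by positivity) s hs)
        rwa [ENNReal.ofReal_zero] at this)
      (fun d => zero_le)
      (fun d => ?_)
    haveI := um_prob (V := Fin (n d)) d (k d) (hkd d)
    rw [ENNReal.le_ofReal_iff_toReal_le (measure_ne_top _ _) (by positivity)]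
    exact part1_main d (k d) (n d) (s d) (hkd d) ε' hε'0 hε'2 (hn' d)
  · intro d hd
    exact part2_main d (k d) (s d) (n d) (hkd d) (hs1 d) hd
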